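/- arXiv:2308.13009 — 3 statements merged into one kernel-verified Lean document; each statement's English description precedes it below -/
import Mathlib

section
/- Let g : [a, b] → ℝ be convex and differentiable, and let a = x0 < x1 < ... < xn = b be a partition with g'(x_i) ≠ g'(x_{i+1}) for all i. For each i, let T_i be the triangle with vertices (x_i, g(x_i)), (x_{i+1}, g(x_{i+1})), and the intersection v_{i,i+1} of the tangents at x_i and x_{i+1}. Then the convex hull of the union of the triangles T_0, ..., T_{n-1} equals the convex hull of the point set {(x0, g(x0)), (xn, g(xn)), v_{0,1}, ..., v_{n-1,n}}. -/
/-!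
Convexity forces `g'(x_i) ≤ slope ≤ g'(x_{i+1})` on each cell, so (the derivatives being
distinct) the tangent intersection `v_{i,i+1}` has abscissa in `[x_i, x_{i+1}]`. Hence an
interior node `(x_i, g x_i)` lies on the tangent at `x_i` between `v_{i-1,i}` and `v_{i,i+1}`,
so every triangle vertex is in the hull of the endpoints and the `v`'s; conversely, each of
these points is a vertex of some triangle.
-/

open Set

lemma mem_segment_of_mem_line {x y₀ d : ℝ} {p r : ℝ × ℝ}
    (hp : p.2 = y₀ + d * (p.1 - x)) (hr : r.2 = y₀ + d * (r.1 - x))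
    (hpx : p.1 ≤ x) (hxr : x ≤ r.1) : (x, y₀) ∈ segment ℝ p r := by
  let f : ℝ →ᵃ[ℝ] ℝ × ℝ :=
    (AffineMap.id ℝ ℝ).prod (AffineMap.const ℝ ℝ (y₀ - d * x) + d • AffineMap.id ℝ ℝ)
  have hf : ∀ t, f t = (t, y₀ + d * (t - x)) := fun t => by
    simp only [f, AffineMap.prod_apply, AffineMap.coe_add, AffineMap.coe_smul, Pi.add_apply,
      Pi.smul_apply, AffineMap.const_apply, AffineMap.id_apply, smul_eq_mul, Prod.mk.injEq, true_and]
    ring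
  have hfp : f p.1 = p := by rw [hf, ← hp]
  have hfr : f r.1 = r := by rw [hf, ← hr]
  rw [← hfp, ← hfr, ← image_segment, segment_eq_Icc (hpx.trans hxr)]
  exact ⟨x, ⟨hpx, hxr⟩, by rw [hf, sub_self, mul_zero, add_zero]⟩

lemma ConvexOn.mem_Icc_of_mem_tangents {S : Set ℝ} {g : ℝ → ℝ} {x y dx dy : ℝ}
    (hg : ConvexOn ℝ S g) (hx : x ∈ S) (hy : y ∈ S) (hxy : x < y)
    (hgx : HasDerivAt g dx x) (hgy : HasDerivAt g dy y) (hne : dx ≠ dy) {p : ℝ × ℝ}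
    (hpx : p.2 = g x + dx * (p.1 - x)) (hpy : p.2 = g y + dy * (p.1 - y)) :
    p.1 ∈ Icc x y := by
  have hdx := hg.le_slope_of_hasDerivAt hx hy hxy hgx
  have hdy := hg.slope_le_of_hasDerivAt hx hy hxy hgy
  have hdxy : dx < dy := lt_of_le_of_ne (hdx.trans hdy) hne
  have hm : (y - x) * slope g x y = g y - g x := sub_smul_slope g x y
  have hleft : (dy - dx) * (p.1 - x) = (dy - slope g x y) * (y - x) := by
    linear_combination hpx - hpy + hm
  have hright : (dy - dx) * (y - p.1) = (slope g x y - dx) * (y - x) := by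
    linear_combination hpy - hpx - hm
  constructor <;> nlinarith

lemma subset_iUnion_convexHull_triangles {E : Type*} [AddCommGroup E] [Module ℝ E] {n : ℕ}
    (hn : 0 < n) (P : Fin (n + 1) → E) (v : Fin n → E) :
    {P 0, P (Fin.last n)} ∪ range v ⊆ ⋃ i, convexHull ℝ {P i.castSucc, P i.succ, v i} := by
  have : NeZero n := ⟨hn.ne'⟩
  have hlast_ne_zero : Fin.last n ≠ 0 := Fin.last_pos'.ne'
  obtain ⟨first, hfirst⟩ := Fin.exists_castSucc_eq.2 hlast_ne_zero.symm
  obtain ⟨last, hlast⟩ := Fin.exists_succ_eq.2 hlast_ne_zero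
  rintro p ((rfl | rfl) | ⟨i, rfl⟩)
  · exact mem_iUnion.2 ⟨first, subset_convexHull ℝ _ (by rw [hfirst]; exact Or.inl rfl)⟩
  · exact mem_iUnion.2 ⟨last, subset_convexHull ℝ _ (by rw [hlast]; exact Or.inr (Or.inl rfl))⟩
  · exact mem_iUnion.2 ⟨i, subset_convexHull ℝ _ (Or.inr (Or.inr rfl))⟩

theorem stmt_12 (a b : ℝ) (g g' : ℝ → ℝ) (n : ℕ) (hn : 0 < n)
    (xs : Fin (n + 1) → ℝ) (hmono : StrictMono xs)
    (hxa : xs 0 = a) (hxb : xs (Fin.last n) = b)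
    (hconv : ConvexOn ℝ (Set.Icc a b) g)
    (hderiv : ∀ x ∈ Set.Icc a b, HasDerivAt g (g' x) x)
    (hne : ∀ i : Fin n, g' (xs i.castSucc) ≠ g' (xs i.succ))
    (v : Fin n → ℝ × ℝ)
    (hv : ∀ i : Fin n,
      (v i).2 = g (xs i.castSucc) + g' (xs i.castSucc) * ((v i).1 - xs i.castSucc) ∧
      (v i).2 = g (xs i.succ) + g' (xs i.succ) * ((v i).1 - xs i.succ)) :
    convexHull ℝ
        (⋃ i : Fin n,
          convexHull ℝ
            ({(xs i.castSucc, g (xs i.castSucc)), (xs i.succ, g (xs i.succ)),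
              v i} : Set (ℝ × ℝ)))
      = convexHull ℝ (({(a, g a), (b, g b)} : Set (ℝ × ℝ)) ∪ Set.range v) := by
  subst hxa hxb
  set S : Set (ℝ × ℝ) := {(xs 0, g (xs 0)), (xs (Fin.last n), g (xs (Fin.last n)))} ∪ range v
  have hnode : ∀ j, xs j ∈ Icc (xs 0) (xs (Fin.last n)) := fun j =>
    ⟨hmono.monotone (Fin.zero_le j), hmono.monotone (Fin.le_last j)⟩
  have hvertex : ∀ i : Fin n, (v i).1 ∈ Icc (xs i.castSucc) (xs i.succ) := fun i =>
    hconv.mem_Icc_of_mem_tangents (hnode _) (hnode _) (hmono i.castSucc_lt_succ)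
      (hderiv _ (hnode _)) (hderiv _ (hnode _)) (hne i) (hv i).1 (hv i).2
  have hv_mem : ∀ i, v i ∈ convexHull ℝ S := fun i => subset_convexHull ℝ S (Or.inr ⟨i, rfl⟩)
  have hgraph : ∀ j, (xs j, g (xs j)) ∈ convexHull ℝ S := by
    intro j
    by_cases h0 : j = 0
    · subst h0; exact subset_convexHull ℝ S (Or.inl (Or.inl rfl))
    by_cases hl : j = Fin.last n
    · subst hl; exact subset_convexHull ℝ S (Or.inl (Or.inr rfl))
    obtain ⟨i, rfl⟩ := Fin.exists_succ_eq.2 h0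
    obtain ⟨k, hk⟩ := Fin.exists_castSucc_eq.2 hl
    have hseg : (xs i.succ, g (xs i.succ)) ∈ segment ℝ (v i) (v k) :=
      mem_segment_of_mem_line (hv i).2 (hk ▸ (hv k).1) (hvertex i).2 (hk ▸ (hvertex k).1)
    exact (convex_convexHull ℝ S).segment_subset (hv_mem i) (hv_mem k) hseg
  apply Subset.antisymm
  · refine convexHull_min (iUnion_subset fun i => ?_) (convex_convexHull ℝ S)
    refine convexHull_min ?_ (convex_convexHull ℝ S)
    rintro p (rfl | rfl | rfl)
    exacts [hgraph _, hgraph _, hv_mem i]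
  · have hS := subset_iUnion_convexHull_triangles hn (fun j => (xs j, g (xs j))) v
    exact convexHull_min (hS.trans (subset_convexHull ℝ _)) (convex_convexHull ℝ _)
end

section
/- Let g : [a, b] → ℝ be convex and differentiable with partition a = x0 < ... < xn = b satisfying g'(x_i) ≠ g'(x_{i+1}). Every graph point (x, g(x)), x ∈ [a, b], lies in the convex hull of {(x0, g(x0)), (xn, g(xn))} ∪ {v_{0,1}, ..., v_{n-1,n}}, where v_{i,i+1} is the intersection of the tangents to g at x_i and x_{i+1}. -/
/-!
On `[xᵢ, xᵢ₊₁]` the graph of a convex `g` lies below the chord and above the larger of the two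
tangents at `xᵢ` and `xᵢ₊₁`, i.e. inside the triangle spanned by the two graph points and the
tangent intersection `vᵢ`. The interior graph points `(xᵢ, g xᵢ)` are not hull generators, but each
lies on the tangent at `xᵢ` between `vᵢ₋₁` and `vᵢ`; that `vᵢ` lies above `[xᵢ, xᵢ₊₁]` follows
from the tangent inequality and `g'(xᵢ) ≠ g'(xᵢ₊₁)`.
-/

open Set AffineMap

theorem Fin.exists_apply_castSucc_le_le_apply_succ {α : Type*} [LinearOrder α] :
    ∀ {n : ℕ} (f : Fin (n + 2) → α) {x : α}, f 0 ≤ x → x ≤ f (Fin.last (n + 1)) →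
      ∃ i : Fin (n + 1), f i.castSucc ≤ x ∧ x ≤ f i.succ
  | 0, _, _, h₀, h₁ => ⟨0, h₀, h₁⟩
  | n + 1, f, x, h₀, h₁ => by
    by_cases h : x ≤ f (Fin.last (n + 1)).castSucc
    · obtain ⟨i, hi⟩ := Fin.exists_apply_castSucc_le_le_apply_succ (f ∘ Fin.castSucc) h₀ h
      exact ⟨i.castSucc, hi⟩
    · exact ⟨Fin.last (n + 1), le_of_not_ge h, h₁⟩

theorem Convex.lineMap_mem_of_le {𝕜 E : Type*} [Field 𝕜] [LinearOrder 𝕜] [IsStrictOrderedRing 𝕜]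
    [AddCommGroup E] [Module 𝕜 E] {C : Set E} (hC : Convex 𝕜 C) (p q : E) {s r t : 𝕜}
    (hs : lineMap p q s ∈ C) (ht : lineMap p q t ∈ C) (hsr : s ≤ r) (hrt : r ≤ t) :
    lineMap p q r ∈ C :=
  (hC.affine_preimage (lineMap p q)).ordConnected.out hs ht ⟨hsr, hrt⟩

theorem Convex.mk_mem_of_le_of_le {C : Set (ℝ × ℝ)} (hC : Convex ℝ C) {x y₁ y y₂ : ℝ}
    (h₁ : (x, y₁) ∈ C) (h₂ : (x, y₂) ∈ C) (hy₁ : y₁ ≤ y) (hy₂ : y ≤ y₂) : (x, y) ∈ C := by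
  have key : ∀ r : ℝ, (x, r) = lineMap (x, 0) (x, 1) r := fun r => by
    simp only [lineMap_apply_module, Prod.smul_mk, Prod.mk_add_mk, smul_eq_mul, Prod.ext_iff]
    constructor <;> ring
  rw [key] at h₁ h₂ ⊢
  exact hC.lineMap_mem_of_le _ _ h₁ h₂ hy₁ hy₂

theorem Convex.mk_mem_of_mem_line {C : Set (ℝ × ℝ)} (hC : Convex ℝ C) (x₀ y₀ m : ℝ)
    {p q : ℝ × ℝ} (hp : p ∈ C) (hq : q ∈ C) (hpl : p.2 = y₀ + m * (p.1 - x₀))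
    (hql : q.2 = y₀ + m * (q.1 - x₀)) {x y : ℝ} (hy : y = y₀ + m * (x - x₀)) (hpx : p.1 ≤ x)
    (hxq : x ≤ q.1) : (x, y) ∈ C := by
  subst hy
  have key : ∀ r : ℝ, (r, y₀ + m * (r - x₀)) = lineMap (0, y₀ - m * x₀) (1, y₀ - m * x₀ + m) r :=
    fun r => by
      simp only [lineMap_apply_module, Prod.smul_mk, Prod.mk_add_mk, smul_eq_mul, Prod.ext_iff]
      constructor <;> ring
  rw [key]
  refine hC.lineMap_mem_of_le _ _ ?_ ?_ hpx hxq
  · rwa [← key, ← hpl]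
  · rwa [← key, ← hql]

theorem ConvexOn.map_lineMap_le {s : Set ℝ} {g : ℝ → ℝ} (hg : ConvexOn ℝ s g) {u w θ : ℝ}
    (hu : u ∈ s) (hw : w ∈ s) (hθ : θ ∈ Icc (0 : ℝ) 1) :
    g (lineMap u w θ) ≤ lineMap (g u) (g w) θ := by
  simpa only [lineMap_apply_module, smul_eq_mul] using
    hg.2 hu hw (sub_nonneg.2 hθ.2) hθ.1 (sub_add_cancel 1 θ)

theorem ConvexOn.add_mul_sub_le_of_hasDerivAt {s : Set ℝ} {g : ℝ → ℝ} {x y d : ℝ}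
    (hg : ConvexOn ℝ s g) (hx : x ∈ s) (hy : y ∈ s) (hd : HasDerivAt g d x) :
    g x + d * (y - x) ≤ g y := by
  rcases lt_trichotomy x y with h | rfl | h
  · have := hg.le_slope_of_hasDerivAt hx hy h hd
    rw [slope_def_field, le_div_iff₀ (sub_pos.2 h)] at this
    linarith
  · simp
  · have := hg.slope_le_of_hasDerivAt hy hx h hd
    rw [slope_def_field, div_le_iff₀ (sub_pos.2 h)] at this
    linarith

theorem ConvexOn.mem_Icc_of_tangents_eq {s : Set ℝ} {g : ℝ → ℝ} {u w t du dw : ℝ}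
    (hg : ConvexOn ℝ s g) (hu : u ∈ s) (hw : w ∈ s) (huw : u ≤ w)
    (hdu : HasDerivAt g du u) (hdw : HasDerivAt g dw w) (hne : du ≠ dw)
    (ht : g u + du * (t - u) = g w + dw * (t - w)) : t ∈ Icc u w := by
  have tu := hg.add_mul_sub_le_of_hasDerivAt hu hw hdu
  have tw := hg.add_mul_sub_le_of_hasDerivAt hw hu hdw
  rcases huw.lt_or_eq with huw | rfl
  · have hd : du < dw := lt_of_le_of_ne (by nlinarith) hne
    constructor <;> nlinarith
  · have : (du - dw) * (t - u) = 0 := by linarith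
    have : t = u := by simpa [sub_eq_zero, hne] using this
    simp [this]

theorem ConvexOn.mk_apply_mem_of_tangents_eq {s : Set ℝ} {g g' : ℝ → ℝ} (hg : ConvexOn ℝ s g)
    (hd : ∀ x ∈ s, HasDerivAt g (g' x) x) {C : Set (ℝ × ℝ)} (hC : Convex ℝ C) {u w : ℝ}
    (hu : u ∈ s) (hw : w ∈ s) {V : ℝ × ℝ} (hVu : V.2 = g u + g' u * (V.1 - u))
    (hVw : V.2 = g w + g' w * (V.1 - w))
    (hPu : (u, g u) ∈ C) (hPw : (w, g w) ∈ C) (hVC : V ∈ C) {x : ℝ} (hx : x ∈ Icc u w) :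
    (x, g x) ∈ C := by
  have hxs : x ∈ s := hg.1.ordConnected.out hu hw hx
  -- a point of `C` below `(x, g x)` on a tangent, and one above it on the chord
  obtain ⟨y, hyg, hyC⟩ : ∃ y ≤ g x, (x, y) ∈ C := by
    rcases le_total x V.1 with hxV | hVx
    · exact ⟨_, hg.add_mul_sub_le_of_hasDerivAt hu hxs (hd u hu),
        hC.mk_mem_of_mem_line u (g u) (g' u) hPu hVC (by simp) hVu rfl hx.1 hxV⟩
    · exact ⟨_, hg.add_mul_sub_le_of_hasDerivAt hw hxs (hd w hw),
        hC.mk_mem_of_mem_line w (g w) (g' w) hVC hPw hVw (by simp) rfl hVx hx.2⟩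
  obtain ⟨θ, hθ, rfl⟩ : ∃ θ ∈ Icc (0 : ℝ) 1, lineMap u w θ = x := by
    rw [← segment_eq_Icc (hx.1.trans hx.2), segment_eq_image_lineMap] at hx
    exact hx
  have hchord : (lineMap u w θ, lineMap (g u) (g w) θ) ∈ C := by
    convert hC.lineMap_mem hPu hPw hθ using 1
    ext <;> simp [lineMap_apply_module]
  exact hC.mk_mem_of_le_of_le hyC hchord hyg (hg.map_lineMap_le hu hw hθ)

theorem stmt_13 (a b : ℝ) (g g' : ℝ → ℝ) (n : ℕ) (hn : 0 < n)
    (xs : Fin (n + 1) → ℝ) (hmono : StrictMono xs)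
    (hxa : xs 0 = a) (hxb : xs (Fin.last n) = b)
    (hconv : ConvexOn ℝ (Set.Icc a b) g)
    (hderiv : ∀ x ∈ Set.Icc a b, HasDerivAt g (g' x) x)
    (hne : ∀ i : Fin n, g' (xs i.castSucc) ≠ g' (xs i.succ))
    (v : Fin n → ℝ × ℝ)
    (hv : ∀ i : Fin n,
      (v i).2 = g (xs i.castSucc) + g' (xs i.castSucc) * ((v i).1 - xs i.castSucc) ∧
      (v i).2 = g (xs i.succ) + g' (xs i.succ) * ((v i).1 - xs i.succ)) :
    ∀ x ∈ Set.Icc a b,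
      ((x, g x) : ℝ × ℝ) ∈
        convexHull ℝ (({(a, g a), (b, g b)} : Set (ℝ × ℝ)) ∪ Set.range v) := by
  obtain ⟨m, rfl⟩ : ∃ m, n = m + 1 := ⟨n - 1, by omega⟩
  set H := convexHull ℝ (({(a, g a), (b, g b)} : Set (ℝ × ℝ)) ∪ Set.range v)
  have hH : Convex ℝ H := convex_convexHull ℝ _
  have hvH : ∀ i, v i ∈ H := fun i => subset_convexHull ℝ _ (Or.inr ⟨i, rfl⟩)
  have hxs : ∀ j, xs j ∈ Icc a b := fun j =>
    ⟨hxa ▸ hmono.monotone (Fin.zero_le j), hxb ▸ hmono.monotone (Fin.le_last j)⟩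
  have hvI : ∀ i, (v i).1 ∈ Icc (xs i.castSucc) (xs i.succ) := fun i =>
    hconv.mem_Icc_of_tangents_eq (hxs _) (hxs _) (hmono Fin.castSucc_lt_succ).le
      (hderiv _ (hxs _)) (hderiv _ (hxs _)) (hne i) ((hv i).1.symm.trans (hv i).2)
  have hP : ∀ j, (xs j, g (xs j)) ∈ H := by
    refine Fin.cases ?_ (Fin.lastCases ?_ fun k => ?_)
    · rw [hxa]
      exact subset_convexHull ℝ _ (Or.inl (mem_insert _ _))
    · rw [Fin.succ_last, hxb]
      exact subset_convexHull ℝ _ (Or.inl (mem_insert_of_mem _ rfl))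
    · rw [Fin.succ_castSucc]
      refine hH.mk_mem_of_mem_line _ _ _ (hvH k.castSucc) (hvH k.succ) ?_ (hv k.succ).1
        (by simp) ?_ (hvI k.succ).1
      · rw [(hv _).2, Fin.succ_castSucc]
      · simpa only [Fin.succ_castSucc] using (hvI k.castSucc).2
  intro x hx
  obtain ⟨i, hi⟩ := Fin.exists_apply_castSucc_le_le_apply_succ xs (hxa ▸ hx.1) (hxb ▸ hx.2)
  exact hconv.mk_apply_mem_of_tangents_eq hderiv hH (hxs _) (hxs _) (hv i).1 (hv i).2
    (hP _) (hP _) (hvH i) hi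
end

section
/- Refinement tightens the relaxation: let g : [a, b] → ℝ be convex and differentiable, let P ⊆ P' be two partitions of [a, b] (both containing a and b, with distinct derivative values at consecutive points). Then the convex hull of the triangles constructed from P' is contained in the convex hull of the triangles constructed from P. -/
/-
When `g` is convex and `g' p ≠ g' q`, each tangent at an endpoint of `[p, q]` lies strictly below
the graph at the other endpoint, so the triangle on `[p, q]` is exactly the region above both
endpoint tangents and below the secant. If `[p', q'] ⊆ [p, q]`, the vertices of the triangle on
`[p', q']` lie in that region: its graph points lie above every tangent and below the secant of
`[p, q]`, and on `[p', q']` the tangents at `p'` and `q'` dominate those at `p` and `q` because `g'`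
is monotone. Every sub-interval of `P'` lies in a sub-interval of `P`, so every triangle generating
the relaxation of `P'` lies in the relaxation of `P`.
-/

/-- Intersection point of the tangent lines to `g` at `p` and `q`
(with derivative function `g'`). -/
noncomputable def tangentVertex (g g' : ℝ → ℝ) (p q : ℝ) : ℝ × ℝ :=
  let xs := (g q - g p - q * g' q + p * g' p) / (g' p - g' q)
  (xs, g p + g' p * (xs - p))

/-- `p` and `q` are consecutive points of the partition `P`. -/
def Consecutive (P : Finset ℝ) (p q : ℝ) : Prop :=
  p ∈ P ∧ q ∈ P ∧ p < q ∧ ∀ r ∈ P, ¬(p < r ∧ r < q)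

/-- The polyhedral relaxation of `y = g x` built from the partition `P`:
the convex hull of the triangles formed on each sub-interval by the two
endpoint graph points and the tangent-intersection vertex. -/
noncomputable def polyRelaxation (g g' : ℝ → ℝ) (P : Finset ℝ) : Set (ℝ × ℝ) :=
  convexHull ℝ
    (⋃ pq ∈ {pq : ℝ × ℝ | Consecutive P pq.1 pq.2},
      convexHull ℝ
        ({(pq.1, g pq.1), (pq.2, g pq.2), tangentVertex g g' pq.1 pq.2} :
          Set (ℝ × ℝ)))

open Set

variable {s : Set ℝ} {g g' : ℝ → ℝ} {d d' e p p' q q' t u x y : ℝ}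

namespace ConvexOn

theorem tangent_le (hg : ConvexOn ℝ s g) (hx : x ∈ s) (hu : u ∈ s) (hd : HasDerivAt g d x) :
    g x + d * (u - x) ≤ g u := by
  rcases lt_trichotomy x u with h | rfl | h
  · have := hg.le_slope_of_hasDerivAt hx hu h hd
    rw [slope_def_field, le_div_iff₀ (sub_pos.2 h)] at this
    linarith
  · simp
  · have := hg.slope_le_of_hasDerivAt hu hx h hd
    rw [slope_def_field, div_le_iff₀ (sub_pos.2 h)] at this
    linarith

theorem deriv_le_deriv (hg : ConvexOn ℝ s g) (hx : x ∈ s) (hu : u ∈ s) (hxu : x ≤ u)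
    (hdx : HasDerivAt g d x) (hdu : HasDerivAt g e u) : d ≤ e := by
  rcases hxu.eq_or_lt with rfl | h
  · exact hdx.unique hdu |>.le
  · exact (hg.le_slope_of_hasDerivAt hx hu h hdx).trans (hg.slope_le_of_hasDerivAt hx hu h hdu)

theorem le_secant (hg : ConvexOn ℝ s g) (hp : p ∈ s) (hq : q ∈ s) (ht : t ∈ Icc p q) :
    g t * (q - p) ≤ g p * (q - t) + g q * (t - p) := by
  obtain ⟨hpt, htq⟩ := ht
  rcases hpt.eq_or_lt with rfl | hpt'
  · linarith
  have hpq : 0 < q - p := by linarith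
  have hcombo : ((q - t) / (q - p)) • p + ((t - p) / (q - p)) • q = t := by
    simp only [smul_eq_mul]
    field_simp
    ring
  have := hg.2 hp hq (show 0 ≤ (q - t) / (q - p) from div_nonneg (by linarith) hpq.le)
    (show 0 ≤ (t - p) / (q - p) from div_nonneg (by linarith) hpq.le) (by field_simp; ring)
  rw [hcombo, smul_eq_mul, smul_eq_mul, div_mul_eq_mul_div, div_mul_eq_mul_div, ← add_div,
    le_div_iff₀ hpq] at this
  linarith

theorem eqOn_tangent_of_tangent_eq (hg : ConvexOn ℝ s g) (hx : x ∈ s) (hu : u ∈ s)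
    (hd : HasDerivAt g d x) (heq : g u = g x + d * (u - x)) :
    EqOn g (fun t ↦ g x + d * (t - x)) (uIcc x u) := by
  rw [← segment_eq_uIcc]
  rintro _ ⟨α, β, hα, hβ, hαβ, rfl⟩
  have hle := hg.2 hx hu hα hβ hαβ
  have hge := hg.tangent_le hx (hg.1 hx hu hα hβ hαβ) hd
  simp only [smul_eq_mul] at hle hge ⊢
  rw [heq] at hle
  have hβ' : β = 1 - α := by linarith
  subst hβ'
  apply le_antisymm _ hge
  linarith

/-- A tangent meets the graph of a convex function only along a segment where the function is
affine; there the derivatives at both ends agree. -/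
theorem tangent_lt (hg : ConvexOn ℝ s g) (hx : x ∈ s) (hu : u ∈ s) (hxu : x ≠ u)
    (hdx : HasDerivAt g d x) (hdu : HasDerivAt g e u) (hde : d ≠ e) :
    g x + d * (u - x) < g u := by
  refine (hg.tangent_le hx hu hdx).lt_of_ne fun heq ↦ hde ?_
  have hline : HasDerivWithinAt g d (uIcc x u) u := by
    have : HasDerivAt (fun t ↦ g x + d * (t - x)) d u := by
      simpa using ((hasDerivAt_id u).sub_const x).const_mul d |>.const_add (g x)
    exact this.hasDerivWithinAt.congr (hg.eqOn_tangent_of_tangent_eq hx hu hdx heq.symm)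
      heq.symm
  exact (uniqueDiffOn_uIcc hxu u right_mem_uIcc).eq_deriv _ hline hdu.hasDerivWithinAt

end ConvexOn

theorem tangentVertex_snd_eq_right (h : g' p ≠ g' q) :
    (tangentVertex g g' p q).2 = g q + g' q * ((tangentVertex g g' p q).1 - q) := by
  have : g' p - g' q ≠ 0 := sub_ne_zero.2 h
  simp only [tangentVertex]
  field_simp
  ring

theorem tangentVertex_fst_mem_Icc (hd : g' p < g' q) (hp : g q + g' q * (p - q) ≤ g p)
    (hq : g p + g' p * (q - p) ≤ g q) : (tangentVertex g g' p q).1 ∈ Icc p q := by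
  have hneg : g' p - g' q < 0 := sub_neg.2 hd
  simp only [tangentVertex, mem_Icc, le_div_iff_of_neg hneg, div_le_iff_of_neg hneg]
  constructor <;> nlinarith

theorem smul_add_smul_add_smul_mem_convexHull {E : Type*} [AddCommGroup E] [Module ℝ E]
    {u v w : E} {α β γ : ℝ} (hα : 0 ≤ α) (hβ : 0 ≤ β) (hγ : 0 ≤ γ) (hαβγ : α + β + γ = 1) :
    α • u + β • v + γ • w ∈ convexHull ℝ {u, v, w} := by
  have := (convex_convexHull ℝ ({u, v, w} : Set E)).sum_mem (t := Finset.univ)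
    (w := ![α, β, γ]) (z := ![u, v, w]) (by simp [Fin.forall_fin_succ, hα, hβ, hγ])
    (by simpa [Fin.sum_univ_three] using hαβγ)
    (fun i _ ↦ subset_convexHull ℝ _ (by fin_cases i <;> simp))
  simpa [Fin.sum_univ_three] using this

def tangentTriangle (g g' : ℝ → ℝ) (p q : ℝ) : Set (ℝ × ℝ) :=
  convexHull ℝ {(p, g p), (q, g q), tangentVertex g g' p q}

theorem tangentTriangle_subset_polyRelaxation {P : Finset ℝ} (h : Consecutive P p q) :
    tangentTriangle g g' p q ⊆ polyRelaxation g g' P :=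
  (subset_biUnion_of_mem (u := fun pq : ℝ × ℝ ↦ tangentTriangle g g' pq.1 pq.2)
    (show (p, q) ∈ {pq : ℝ × ℝ | Consecutive P pq.1 pq.2} from h)).trans (subset_convexHull ℝ _)

/-- The barycentric weight of each graph point is the height of `(x, y)` above the tangent at the
other endpoint, relative to the height of that graph point above the same tangent. -/
theorem mk_mem_tangentTriangle_of_le_secant (hpq : p < q) (hp : g q + g' q * (p - q) < g p)
    (hq : g p + g' p * (q - p) < g q) (hy_p : g p + g' p * (x - p) ≤ y)
    (hy_q : g q + g' q * (x - q) ≤ y) (hy_sec : y * (q - p) ≤ g p * (q - x) + g q * (x - p)) :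
    (x, y) ∈ tangentTriangle g g' p q := by
  have hdp : 0 < g p - (g q + g' q * (p - q)) := sub_pos.2 hp
  have hdq : 0 < g q - (g p + g' p * (q - p)) := sub_pos.2 hq
  have hd : g' p - g' q ≠ 0 := by nlinarith
  set α := (y - (g q + g' q * (x - q))) / (g p - (g q + g' q * (p - q)))
  set β := (y - (g p + g' p * (x - p))) / (g q - (g p + g' p * (q - p)))
  have hαβ : α + β ≤ 1 := by
    rw [div_add_div _ _ hdp.ne' hdq.ne', div_le_one (by positivity)]
    nlinarith
  have hmem := smul_add_smul_add_smul_mem_convexHull (u := (p, g p)) (v := (q, g q))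
    (w := tangentVertex g g' p q) (div_nonneg (sub_nonneg.2 hy_q) hdp.le)
    (div_nonneg (sub_nonneg.2 hy_p) hdq.le) (sub_nonneg.2 hαβ) (add_sub_cancel (α + β) 1)
  rw [tangentTriangle]
  convert hmem using 1
  have hdp' := hdp.ne'
  have hdq' := hdq.ne'
  simp only [α, β, tangentVertex, Prod.smul_mk, smul_eq_mul, Prod.mk_add_mk, Prod.ext_iff]
  constructor <;> field_simp <;> ring

namespace ConvexOn

theorem tangent_le_tangent (hg : ConvexOn ℝ s g) (hp : p ∈ s) (hp' : p' ∈ s)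
    (hdp : HasDerivAt g d p) (hdp' : HasDerivAt g d' p') (h : p' ∈ uIcc p x) :
    g p + d * (x - p) ≤ g p' + d' * (x - p') := by
  have htan := hg.tangent_le hp hp' hdp
  rcases le_total p x with hpx | hxp
  · rw [uIcc_of_le hpx] at h
    have := hg.deriv_le_deriv hp hp' h.1 hdp hdp'
    nlinarith [h.2]
  · rw [uIcc_of_ge hxp] at h
    have := hg.deriv_le_deriv hp' hp h.2 hdp' hdp
    nlinarith [h.1]

theorem mk_mem_tangentTriangle (hg : ConvexOn ℝ s g) (hderiv : ∀ x ∈ s, HasDerivAt g (g' x) x)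
    (hp : p ∈ s) (hq : q ∈ s) (hpq : p < q) (hne : g' p ≠ g' q) {y : ℝ} (hx : x ∈ Icc p q)
    (hy_p : g p + g' p * (x - p) ≤ y) (hy_q : g q + g' q * (x - q) ≤ y) (hy : y ≤ g x) :
    (x, y) ∈ tangentTriangle g g' p q := by
  refine mk_mem_tangentTriangle_of_le_secant hpq (hg.tangent_lt hq hp hpq.ne' (hderiv q hq)
    (hderiv p hp) hne.symm) (hg.tangent_lt hp hq hpq.ne (hderiv p hp) (hderiv q hq) hne)
    hy_p hy_q ?_
  have := hg.le_secant hp hq hx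
  nlinarith [hx.1, hx.2]

theorem tangentTriangle_subset (hg : ConvexOn ℝ s g) (hderiv : ∀ x ∈ s, HasDerivAt g (g' x) x)
    (hp : p ∈ s) (hq : q ∈ s) (hpp' : p ≤ p') (hp'q' : p' < q') (hq'q : q' ≤ q)
    (hne : g' p ≠ g' q) (hne' : g' p' ≠ g' q') :
    tangentTriangle g g' p' q' ⊆ tangentTriangle g g' p q := by
  have hsub : Icc p q ⊆ s := hg.1.ordConnected.out hp hq
  have hp' : p' ∈ s := hsub ⟨hpp', hp'q'.le.trans hq'q⟩
  have hq' : q' ∈ s := hsub ⟨hpp'.trans hp'q'.le, hq'q⟩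
  have hmem : ∀ x ∈ Icc p' q', ∀ y, g p' + g' p' * (x - p') ≤ y →
      g q' + g' q' * (x - q') ≤ y → y ≤ g x → (x, y) ∈ tangentTriangle g g' p q := by
    intro x hx y hy_p' hy_q' hy
    refine hg.mk_mem_tangentTriangle hderiv hp hq (hpp'.trans_lt (hp'q'.trans_le hq'q)) hne
      ⟨hpp'.trans hx.1, hx.2.trans hq'q⟩ ?_ ?_ hy
    · exact (hg.tangent_le_tangent hp hp' (hderiv p hp) (hderiv p' hp')
        (Icc_subset_uIcc ⟨hpp', hx.1⟩)).trans hy_p'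
    · exact (hg.tangent_le_tangent hq hq' (hderiv q hq) (hderiv q' hq')
        (Icc_subset_uIcc' ⟨hx.2, hq'q⟩)).trans hy_q'
  have hp'q'_tan := hg.tangent_le hp' hq' (hderiv p' hp')
  have hq'p'_tan := hg.tangent_le hq' hp' (hderiv q' hq')
  refine convexHull_min ?_ (convex_convexHull ℝ _)
  rintro z (rfl | rfl | rfl)
  · exact hmem p' ⟨le_rfl, hp'q'.le⟩ _ (by simp) hq'p'_tan le_rfl
  · exact hmem q' ⟨hp'q'.le, le_rfl⟩ _ hp'q'_tan (by simp) le_rfl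
  · have hx := tangentVertex_fst_mem_Icc
      ((hg.deriv_le_deriv hp' hq' hp'q'.le (hderiv p' hp') (hderiv q' hq')).lt_of_ne hne')
      hq'p'_tan hp'q'_tan
    exact hmem _ hx _ le_rfl (tangentVertex_snd_eq_right hne').ge
      (hg.tangent_le hp' (hsub ⟨hpp'.trans hx.1, hx.2.trans hq'q⟩) (hderiv p' hp'))

end ConvexOn

theorem Consecutive.exists_consecutive_of_subset {P P' : Finset ℝ}
    (h : Consecutive P' p' q') (hPP' : P ⊆ P') (hlo : ∃ r ∈ P, r ≤ p') (hhi : ∃ r ∈ P, q' ≤ r) :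
    ∃ p q, Consecutive P p q ∧ p ≤ p' ∧ q' ≤ q := by
  classical
  obtain ⟨-, -, hp'q', hgap⟩ := h
  have hL : (P.filter (· ≤ p')).Nonempty := by simpa [Finset.Nonempty] using hlo
  have hR : (P.filter (q' ≤ ·)).Nonempty := by simpa [Finset.Nonempty] using hhi
  obtain ⟨hpP, hpp'⟩ := Finset.mem_filter.1 ((P.filter (· ≤ p')).max'_mem hL)
  obtain ⟨hqP, hq'q⟩ := Finset.mem_filter.1 ((P.filter (q' ≤ ·)).min'_mem hR)
  refine ⟨_, _, ⟨hpP, hqP, by linarith, fun r hr ⟨hpr, hrq⟩ ↦ ?_⟩, hpp', hq'q⟩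
  rcases le_or_gt r p' with hrp' | hp'r
  · exact hpr.not_ge (Finset.le_max' _ r (Finset.mem_filter.2 ⟨hr, hrp'⟩))
  rcases le_or_gt q' r with hq'r | hrq'
  · exact hrq.not_ge (Finset.min'_le _ r (Finset.mem_filter.2 ⟨hr, hq'r⟩))
  exact hgap r (hPP' hr) ⟨hp'r, hrq'⟩

theorem stmt_15_general (a b : ℝ) (g g' : ℝ → ℝ)
    (hconv : ConvexOn ℝ (Set.Icc a b) g)
    (hderiv : ∀ x ∈ Set.Icc a b, HasDerivAt g (g' x) x)
    (P P' : Finset ℝ) (hPP' : P ⊆ P')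
    (haP : a ∈ P) (hbP : b ∈ P)
    (hP'sub : (P' : Set ℝ) ⊆ Set.Icc a b)
    (hP : ∀ p q, Consecutive P p q → g' p ≠ g' q)
    (hP' : ∀ p q, Consecutive P' p q → g' p ≠ g' q) :
    polyRelaxation g g' P' ⊆ polyRelaxation g g' P := by
  refine convexHull_min (iUnion₂_subset fun ⟨p', q'⟩ h' ↦ ?_) (convex_convexHull ℝ _)
  obtain ⟨p, q, h, hpp', hq'q⟩ := Consecutive.exists_consecutive_of_subset h' hPP'
    ⟨a, haP, (hP'sub h'.1).1⟩ ⟨b, hbP, (hP'sub h'.2.1).2⟩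
  exact (hconv.tangentTriangle_subset hderiv (hP'sub (hPP' h.1)) (hP'sub (hPP' h.2.1)) hpp'
    h'.2.2.1 hq'q (hP p q h) (hP' p' q' h')).trans (tangentTriangle_subset_polyRelaxation h)

theorem stmt_15 (a b : ℝ) (g g' : ℝ → ℝ) (hab : a < b)
    (hconv : ConvexOn ℝ (Set.Icc a b) g)
    (hderiv : ∀ x ∈ Set.Icc a b, HasDerivAt g (g' x) x)
    (P P' : Finset ℝ) (hPP' : P ⊆ P')
    (haP : a ∈ P) (hbP : b ∈ P)
    (hP'sub : (P' : Set ℝ) ⊆ Set.Icc a b)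
    (hP : ∀ p q, Consecutive P p q → g' p ≠ g' q)
    (hP' : ∀ p q, Consecutive P' p q → g' p ≠ g' q) :
    polyRelaxation g g' P' ⊆ polyRelaxation g g' P :=
  stmt_15_general a b g g' hconv hderiv P P' hPP' haP hbP hP'sub hP hP'
end
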